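/- ∑_{k=1}^∞ (−27/16)^k / C(3k,k) = −1/5 + (√15/75)·arctan((4√3 − √15)/11) − (1/6)·log 4. -/

import Mathlib

/-!
By the Beta integral, `1 / C(3k, k) = (3k + 1) ∫₀¹ tᵏ (1 - t)²ᵏ dt`, so the series equals
`∫₀¹ ∑_{k ≥ 1} (3k + 1) uᵏ dt` with `u = -27/16 · t(1-t)²`; since `|u| ≤ 1/4` on `[0, 1]`,
summation and integration commute. The inner sum is a rational function of `t` whose denominator factors as
`(3t + 1)(9t² - 21t + 16)`, so it integrates to logarithms and an arctangent; the arctangent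
values combine to `3 arctan((4√3 - √15)/11)` by the triple-angle formula.
-/

open Real intervalIntegral
open scoped Nat Interval

theorem integral_pow_mul_one_sub_pow_succ (a b : ℕ) :
    ∫ t in (0:ℝ)..1, t ^ a * (1 - t) ^ (b + 1) =
      (b + 1) / (a + 1) * ∫ t in (0:ℝ)..1, t ^ (a + 1) * (1 - t) ^ b := by
  have hu (t : ℝ) : HasDerivAt (fun t ↦ (1 - t) ^ (b + 1)) (-((b + 1) * (1 - t) ^ b)) t := by
    simpa using ((hasDerivAt_id t).const_sub 1).fun_pow (b + 1)
  have hv (t : ℝ) : HasDerivAt (fun t ↦ t ^ (a + 1) / ((a : ℝ) + 1)) (t ^ a) t := by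
    refine ((hasDerivAt_pow (a + 1) t).div_const ((a : ℝ) + 1)).congr_deriv ?_
    push_cast
    field_simp
  have hparts := integral_mul_deriv_eq_deriv_mul (a := 0) (b := 1) (fun t _ ↦ hu t)
    (fun t _ ↦ hv t) (Continuous.intervalIntegrable (by fun_prop) _ _)
    (Continuous.intervalIntegrable (by fun_prop) _ _)
  simp only [sub_self, sub_zero, zero_pow, zero_div, ne_eq, add_eq_zero, one_ne_zero, and_false,
    not_false_eq_true, mul_zero, integral_neg, neg_mul, zero_mul, sub_neg_eq_add,
    zero_add] at hparts
  rw [← integral_const_mul]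
  simp_rw [mul_comm (_ ^ a)]
  rw [hparts]
  congr 1 with t
  field_simp

theorem integral_pow_mul_one_sub_pow (a b : ℕ) :
    ∫ t in (0:ℝ)..1, t ^ a * (1 - t) ^ b = a ! * b ! / (a + b + 1)! := by
  induction b generalizing a with
  | zero => simp [integral_pow, Nat.factorial_succ]; field_simp
  | succ b ih =>
    rw [integral_pow_mul_one_sub_pow_succ, ih, show a + 1 + b + 1 = a + (b + 1) + 1 by ring,
      Nat.factorial_succ a, Nat.factorial_succ b]
    push_cast
    field_simp

theorem inv_choose_eq_integral (a b : ℕ) :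
    (((a + b).choose a : ℕ) : ℝ)⁻¹ = (a + b + 1) * ∫ t in (0:ℝ)..1, t ^ a * (1 - t) ^ b := by
  rw [integral_pow_mul_one_sub_pow, Nat.cast_add_choose, Nat.factorial_succ]
  push_cast
  field_simp

theorem integral_mul_pow_eq_div_choose (x : ℝ) (n : ℕ) :
    ∫ t in (0:ℝ)..1, (3 * n + 4) * (x * (t * (1 - t) ^ 2)) ^ (n + 1) =
      x ^ (n + 1) / ((3 * (n + 1)).choose (n + 1) : ℕ) := by
  have h := inv_choose_eq_integral (n + 1) (2 * n + 2)
  rw [show n + 1 + (2 * n + 2) = 3 * (n + 1) by ring] at h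
  rw [div_eq_mul_inv, h, ← integral_const_mul, ← integral_const_mul]
  congr 1 with t
  rw [mul_pow, mul_pow, ← pow_mul]
  push_cast
  ring

theorem hasSum_mul_add_mul_pow_succ {𝕜 : Type*} [NormedField 𝕜] [CompleteSpace 𝕜] (a b : 𝕜)
    {u : 𝕜} (hu : ‖u‖ < 1) :
    HasSum (fun n : ℕ ↦ (a * n + b) * u ^ (n + 1)) (u * (a * u + b * (1 - u)) / (1 - u) ^ 2) := by
  have hu1 : 1 - u ≠ 0 := by
    rintro h
    simp [← eq_of_sub_eq_zero h] at hu
  have hterm : (fun n : ℕ ↦ (a * n + b) * u ^ (n + 1)) =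
      fun n : ℕ ↦ a * u * (n * u ^ n) + b * u * u ^ n := by
    ext n; ring
  rw [hterm, show u * (a * u + b * (1 - u)) / (1 - u) ^ 2 =
    a * u * (u / (1 - u) ^ 2) + b * u * (1 - u)⁻¹ by field_simp]
  exact ((hasSum_coe_mul_geometric_of_norm_lt_one hu).mul_left _).add
    ((hasSum_geometric_of_norm_lt_one hu).mul_left _)

theorem three_mul_arctan {x : ℝ} (h : 3 * x ^ 2 < 1) :
    3 * arctan x = arctan ((3 * x - x ^ 3) / (1 - 3 * x ^ 2)) := by
  have hsq : 1 - x ^ 2 ≠ 0 := by nlinarith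
  have hsq3 : 1 - 3 * x ^ 2 ≠ 0 := by linarith
  have hmul : 2 * x / (1 - x ^ 2) * x < 1 := by
    rw [div_mul_eq_mul_div, div_lt_one (by nlinarith)]
    linarith
  rw [show (3:ℝ) = 2 + 1 by norm_num, add_mul, one_mul,
    two_mul_arctan (by nlinarith) (by nlinarith), arctan_add hmul]
  congr 1
  have hden : 1 - 2 * x / (1 - x ^ 2) * x ≠ 0 := by linarith
  field_simp
  ring

theorem mul_one_sub_sq_le {t : ℝ} (ht : t ≤ 4 / 3) : t * (1 - t) ^ 2 ≤ 4 / 27 := by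
  nlinarith [mul_nonneg (sq_nonneg (3 * t - 1)) (by linarith : (0:ℝ) ≤ 4 - 3 * t)]

noncomputable def weightedGeomSum (u : ℝ) : ℝ := u * (4 - u) / (1 - u) ^ 2

theorem hasSum_three_mul_add_four_mul_pow_succ {u : ℝ} (hu : |u| < 1) :
    HasSum (fun n : ℕ ↦ (3 * n + 4) * u ^ (n + 1)) (weightedGeomSum u) := by
  rw [show weightedGeomSum u = u * (3 * u + 4 * (1 - u)) / (1 - u) ^ 2 by
    unfold weightedGeomSum; ring]
  exact hasSum_mul_add_mul_pow_succ 3 4 (by rwa [Real.norm_eq_abs])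

theorem hasSum_pow_div_choose_three_mul {x : ℝ} (hx : |x| < 27 / 4) :
    HasSum (fun n : ℕ ↦ x ^ (n + 1) / ((3 * (n + 1)).choose (n + 1) : ℕ))
      (∫ t in (0:ℝ)..1, weightedGeomSum (x * (t * (1 - t) ^ 2))) := by
  set r := |x| * (4 / 27) with hr_def
  have hr : r < 1 := by linarith
  have hr_abs : |r| < 1 := by rwa [abs_of_nonneg (by positivity)]
  have hle {t : ℝ} (ht : t ∈ Ι (0:ℝ) 1) : |x * (t * (1 - t) ^ 2)| ≤ r := by
    rw [Set.uIoc_of_le zero_le_one] at ht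
    have h0 : 0 ≤ t * (1 - t) ^ 2 := by have := ht.1.le; positivity
    rw [abs_mul, abs_of_nonneg h0]
    exact mul_le_mul_of_nonneg_left (mul_one_sub_sq_le (by linarith [ht.2])) (abs_nonneg x)
  simp_rw [← integral_mul_pow_eq_div_choose]
  refine hasSum_integral_of_dominated_convergence (fun n _ ↦ (3 * n + 4) * r ^ (n + 1))
    (fun n ↦ (by fun_prop : Continuous _).aestronglyMeasurable) (fun n ↦ .of_forall fun t ht ↦ ?_)
    (.of_forall fun _ _ ↦ (hasSum_three_mul_add_four_mul_pow_succ hr_abs).summable)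
    intervalIntegrable_const
    (.of_forall fun t ht ↦ hasSum_three_mul_add_four_mul_pow_succ ((hle ht).trans_lt hr))
  rw [norm_mul, norm_pow, Real.norm_eq_abs, Real.norm_eq_abs, abs_of_nonneg (by positivity)]
  gcongr
  exact hle ht

-- Partial fractions: for `u = -27/16 · t(1-t)²` one has `16(1 - u) = (3t+1)(9t²-21t+16)`.
noncomputable def weightedGeomSumPrimitive (t : ℝ) : ℝ :=
  -t - log (3 * t + 1) / 9 + log (9 * t ^ 2 - 21 * t + 16) / 18 - 4 / (9 * (3 * t + 1)) +
    (132 * t - 64) / (45 * (9 * t ^ 2 - 21 * t + 16)) + √15 / 225 * arctan ((6 * t - 7) / √15)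

theorem hasDerivAt_weightedGeomSumPrimitive {t : ℝ} (ht : -(1 / 3) < t) :
    HasDerivAt weightedGeomSumPrimitive (weightedGeomSum (-(27 / 16) * (t * (1 - t) ^ 2))) t := by
  have hl : 3 * t + 1 ≠ 0 := by linarith
  have hq : 9 * t ^ 2 - 21 * t + 16 ≠ 0 := by nlinarith [sq_nonneg (6 * t - 7)]
  have dl : HasDerivAt (fun t ↦ 3 * t + 1) 3 t := by
    simpa using ((hasDerivAt_id t).const_mul 3).add_const 1
  have dq : HasDerivAt (fun t ↦ 9 * t ^ 2 - 21 * t + 16) (18 * t - 21) t := by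
    refine ((((hasDerivAt_pow 2 t).const_mul 9).sub ((hasDerivAt_id t).const_mul 21)).add_const
      16).congr_deriv ?_
    simp; ring
  have dc : HasDerivAt (fun t ↦ (6 * t - 7) / √15) (6 / √15) t := by
    simpa using (((hasDerivAt_id t).const_mul 6).sub_const 7).div_const √15
  have dn : HasDerivAt (fun t ↦ 132 * t - 64) 132 t := by
    simpa using ((hasDerivAt_id t).const_mul 132).sub_const 64
  have hF := (((((hasDerivAt_id t).neg.sub ((dl.log hl).div_const 9)).add
    ((dq.log hq).div_const 18)).sub ((hasDerivAt_const t 4).div (dl.const_mul 9) (by simpa))).add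
    (dn.div (dq.const_mul 45) (by simpa))).add (dc.arctan.const_mul (√15 / 225))
  refine hF.congr_deriv ?_
  have h15 : √15 ^ 2 = 15 := Real.sq_sqrt (by norm_num)
  have hD : 16 + 27 * (t * (1 - t) ^ 2) = (3 * t + 1) * (9 * t ^ 2 - 21 * t + 16) := by ring
  have hk : weightedGeomSum (-(27 / 16) * (t * (1 - t) ^ 2)) =
      -27 * (t * (1 - t) ^ 2) * (64 + 27 * (t * (1 - t) ^ 2)) /
        ((3 * t + 1) * (9 * t ^ 2 - 21 * t + 16)) ^ 2 := by
    rw [weightedGeomSum, ← hD]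
    field_simp
    ring
  -- `hq` in the normal form produced by `field_simp`
  have hq' : t * (t * 9 - 21) + 16 ≠ 0 := by convert hq using 1; ring
  rw [hk]
  field_simp
  rw [h15]
  ring

theorem arctan_seven_div_sqrt_sub_arctan_one_div_sqrt :
    arctan (7 / √15) - arctan (1 / √15) = 3 * arctan ((4 * √3 - √15) / 11) := by
  have h3 : √3 ^ 2 = 3 := Real.sq_sqrt (by norm_num)
  have h15 : √15 ^ 2 = 15 := Real.sq_sqrt (by norm_num)
  have hprod : 3 ≤ √3 * √15 := by
    nlinarith [mul_pow √3 √15 2, mul_nonneg (sqrt_nonneg 3) (sqrt_nonneg 15)]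
  set x := (4 * √3 - √15) / 11 with hx
  have hx2 : x ^ 2 = (63 - 8 * (√3 * √15)) / 121 := by
    rw [hx]
    linear_combination (16 * h3 + h15) / 121
  have h3x : 3 * x ^ 2 < 1 := by
    rw [hx2]
    linarith
  have hlhs : (7 / √15 + -(1 / √15)) / (1 - 7 / √15 * -(1 / √15)) = 3 * √15 / 11 := by
    field_simp
    rw [h15]
    ring
  have hrhs : (3 * x - x ^ 3) / (1 - 3 * x ^ 2) = 3 * √15 / 11 := by
    rw [div_eq_div_iff (by linarith) (by norm_num)]
    linear_combination (9 * √15 - 11 * x) * hx2 + (32 * √15 * h3 - 80 * √3 * h15) / 121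
  have hmul : 7 / √15 * -(1 / √15) < 1 := by
    rw [mul_neg]
    linarith [show 0 < 7 / √15 * (1 / √15) by positivity]
  rw [three_mul_arctan h3x, sub_eq_add_neg, ← arctan_neg, arctan_add hmul, hlhs, hrhs]

theorem weightedGeomSumPrimitive_one_sub_zero :
    weightedGeomSumPrimitive 1 - weightedGeomSumPrimitive 0 =
      -(1/5) + (√15/75) * arctan ((4 * √3 - √15) / 11) - (1/6) * log 4 := by
  have hlog : log 16 = 2 * log 4 := by
    rw [show (16:ℝ) = 4 ^ 2 by norm_num, Real.log_pow, Nat.cast_ofNat]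
  unfold weightedGeomSumPrimitive
  norm_num
  rw [neg_div, neg_div, arctan_neg, arctan_neg, hlog]
  linear_combination √15 / 225 * arctan_seven_div_sqrt_sub_arctan_one_div_sqrt

theorem stmt_18 :
    ∑' k : ℕ, (-(27/16) : ℝ)^(k+1) / ((((3*(k+1)).choose (k+1) : ℕ)) : ℝ) =
    -(1/5) + (Real.sqrt 15/75)*Real.arctan ((4*Real.sqrt 3 - Real.sqrt 15)/11) - (1/6)*Real.log 4 := by
  have hsum := hasSum_pow_div_choose_three_mul (x := -(27/16)) (by norm_num [abs_of_neg])
  have hcont : ContinuousOn (fun t ↦ weightedGeomSum (-(27/16) * (t * (1 - t) ^ 2))) [[0, 1]] := by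
    refine ContinuousOn.div (by fun_prop) (by fun_prop) fun t ht ↦ pow_ne_zero 2 ?_
    rw [Set.uIcc_of_le zero_le_one] at ht
    have : 0 ≤ t * (1 - t) ^ 2 := by have := ht.1; positivity
    linarith
  have hderiv : ∀ t ∈ [[(0:ℝ), 1]], HasDerivAt weightedGeomSumPrimitive
      (weightedGeomSum (-(27/16) * (t * (1 - t) ^ 2))) t := fun t ht ↦ by
    rw [Set.uIcc_of_le zero_le_one] at ht
    exact hasDerivAt_weightedGeomSumPrimitive (by linarith [ht.1])
  rw [hsum.tsum_eq, integral_eq_sub_of_hasDerivAt hderiv hcont.intervalIntegrable,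
    weightedGeomSumPrimitive_one_sub_zero]
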